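/- In the ring of formal power series in a single variable z over ℚ(q), the q-exponential satisfies exp_q(z) · exp_{q^{-1}}(-z) = 1, where exp_q(z) = Σ_{n≥0} z^n/((n)_q!). -/

import Mathlib

/-!
With `c = q²`, the q-exponential satisfies `exp_q(c z) = (1 + (c - 1) z) exp_q(z)`, and the same
equation for `q⁻¹`, rescaled, gives `exp_{q⁻¹}(-z) = (1 + (c - 1) z) exp_{q⁻¹}(-c z)`. Hence the
product `exp_q(z) exp_{q⁻¹}(-z)` is invariant under `z ↦ c z`; since `cⁿ ≠ 1` for `n ≥ 1` when `q`
is generic, all its coefficients of positive degree vanish.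
-/

open PowerSeries

noncomputable def qNum {K : Type*} [Field K] (q : K) (n : ℕ) : K :=
  (q ^ (2 * n) - 1) / (q ^ 2 - 1)

noncomputable def qFact {K : Type*} [Field K] (q : K) (n : ℕ) : K :=
  ∏ k ∈ Finset.Icc 1 n, qNum q k

namespace PowerSeries

theorem rescale_one_add_C_mul_X {R : Type*} [CommSemiring R] (a c : R) :
    rescale c (1 + C a * X) = 1 + C (a * c) * X := by
  ext (_ | _ | n) <;> simp only [coeff_rescale] <;> simp [coeff_one, coeff_X, mul_comm]

theorem eq_C_of_rescale_eq_self {R : Type*} [CommRing R] [IsDomain R] {c : R}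
    (hc : ∀ n, 1 ≤ n → c ^ n ≠ 1) {f : R⟦X⟧} (hf : rescale c f = f) :
    f = C (constantCoeff f) := by
  ext n
  rcases Nat.eq_zero_or_pos n with rfl | hn
  · simp
  · have h : (c ^ n - 1) * coeff n f = 0 := by
      rw [sub_mul, one_mul, ← coeff_rescale, hf, sub_self]
    rw [coeff_C, if_neg hn.ne', (mul_eq_zero.1 h).resolve_left (sub_ne_zero.2 (hc n hn))]

end PowerSeries

section QExp

variable {K : Type*} [Field K] {p : K}

noncomputable def qExp (p : K) : K⟦X⟧ :=
  mk fun n => (qFact p n)⁻¹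

theorem qFact_succ (p : K) (n : ℕ) : qFact p (n + 1) = qFact p n * qNum p (n + 1) :=
  Finset.prod_Icc_succ_top (by omega) _

theorem qNum_ne_zero_iff {n : ℕ} : qNum p n ≠ 0 ↔ p ^ (2 * n) ≠ 1 ∧ p ^ 2 ≠ 1 := by
  simp [qNum, sub_eq_zero]

theorem qNum_inv_ne_zero_iff {n : ℕ} : qNum p⁻¹ n ≠ 0 ↔ qNum p n ≠ 0 := by
  simp only [qNum_ne_zero_iff, inv_pow, ne_eq, inv_eq_one]

theorem sub_one_mul_qNum (hp : p ^ 2 ≠ 1) (n : ℕ) :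
    (p ^ 2 - 1) * qNum p n = p ^ (2 * n) - 1 :=
  mul_div_cancel₀ _ (sub_ne_zero.2 hp)

theorem rescale_qExp (hgen : ∀ n, 1 ≤ n → qNum p n ≠ 0) :
    rescale (p ^ 2) (qExp p) = (1 + C (p ^ 2 - 1) * X) * qExp p := by
  have hp2 : p ^ 2 ≠ 1 := (qNum_ne_zero_iff.1 (hgen 1 le_rfl)).2
  ext (_ | n)
  · simp [qExp, qFact]
  · have hn := hgen (n + 1) (by omega)
    have hpow : p ^ (2 * (n + 1)) = 1 + (p ^ 2 - 1) * qNum p (n + 1) := by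
      rw [sub_one_mul_qNum hp2]; ring
    rw [add_mul, one_mul, mul_assoc, map_add, coeff_C_mul, coeff_succ_X_mul, coeff_rescale]
    simp only [qExp, coeff_mk, qFact_succ, mul_inv, ← pow_mul]
    rw [hpow]
    field_simp

theorem rescale_neg_one_qExp_inv (hp : p ≠ 0) (hgen : ∀ n, 1 ≤ n → qNum p n ≠ 0) :
    rescale (-1) (qExp p⁻¹) =
      (1 + C (p ^ 2 - 1) * X) * rescale (p ^ 2) (rescale (-1) (qExp p⁻¹)) := by
  have h := congrArg (rescale (-p ^ 2))
    (rescale_qExp (p := p⁻¹) fun n hn => qNum_inv_ne_zero_iff.2 (hgen n hn))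
  have hscale : p⁻¹ ^ 2 * -p ^ 2 = -1 := by field_simp
  have hcoeff : (p⁻¹ ^ 2 - 1) * -p ^ 2 = p ^ 2 - 1 := by field_simp; ring
  rw [rescale_rescale, hscale, map_mul, rescale_one_add_C_mul_X, hcoeff] at h
  rw [rescale_rescale, neg_one_mul, h]

end QExp

/-- as formal power series over a field `K` with generic `q`
(i.e. `q ≠ 0` and no `(n)_q` vanishes for `n ≥ 1`),
`exp_q(z) * exp_{q⁻¹}(-z) = 1`, where `exp_q(z) = Σ_n z^n / (n)_q!`. -/
theorem qexp_mul_qexp_inv_neg {K : Type*} [Field K] (q : K) (hq : q ≠ 0)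
    (hgen : ∀ n : ℕ, 1 ≤ n → qNum q n ≠ 0) :
    (PowerSeries.mk fun n => (qFact q n)⁻¹) *
      (PowerSeries.mk fun n => (-1 : K) ^ n * (qFact q⁻¹ n)⁻¹) = 1 := by
  have hB : (mk fun n => (-1 : K) ^ n * (qFact q⁻¹ n)⁻¹) = rescale (-1) (qExp q⁻¹) := by
    rw [qExp, rescale_mk]
  have hc : ∀ n, 1 ≤ n → (q ^ 2) ^ n ≠ 1 := fun n hn => by
    rw [← pow_mul]
    exact (qNum_ne_zero_iff.1 (hgen n hn)).1
  have hfix : rescale (q ^ 2) (qExp q * rescale (-1) (qExp q⁻¹)) =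
      qExp q * rescale (-1) (qExp q⁻¹) := by
    rw [map_mul, rescale_qExp hgen, mul_assoc, mul_left_comm,
      ← rescale_neg_one_qExp_inv hq hgen]
  rw [hB, ← qExp, eq_C_of_rescale_eq_self hc hfix]
  simp [qExp, qFact, rescale_mk]
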